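/- Let u be a finite-dimensional nilpotent Lie algebra over a field k of characteristic 0 whose center z equals the derived subalgebra [u,u] and satisfies dim z = 1. Then u is isomorphic as a Lie algebra to the Heisenberg Lie algebra h_{2n+1} for some n ≥ 1, i.e., u admits a basis {X_1,...,X_n, Y_1,...,Y_n, Z} in which the only nonzero brackets among basis elements are [X_i, Y_i] = Z = -[Y_i, X_i] for i = 1,...,n. -/

import Mathlib

open Module LinearMap LinearMap.BilinForm

private def sympEquiv (n : ℕ) : (Fin 2 ⊕ (Fin n ⊕ Fin n)) ≃ (Fin (n+1) ⊕ Fin (n+1)) where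
  toFun s := Sum.elim
      (fun j : Fin 2 => if j = 0 then Sum.inl (0 : Fin (n+1)) else Sum.inr (0 : Fin (n+1)))
      (Sum.elim (fun i => Sum.inl i.succ) (fun i => Sum.inr i.succ)) s
  invFun s := Sum.elim
      (fun j : Fin (n+1) => Fin.cases (Sum.inl (0 : Fin 2)) (fun i => Sum.inr (Sum.inl i)) j)
      (fun j : Fin (n+1) => Fin.cases (Sum.inl (1 : Fin 2)) (fun i => Sum.inr (Sum.inr i)) j) s
  left_inv := by
    rintro (j | (i | i))
    · fin_cases j <;> simp
    · simp
    · simp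
  right_inv := by
    rintro (j | j) <;> induction j using Fin.cases <;> simp

@[simp] private lemma sympEquiv_symm_inl_zero (n : ℕ) :
    (sympEquiv n).symm (Sum.inl 0) = Sum.inl 0 := rfl
@[simp] private lemma sympEquiv_symm_inr_zero (n : ℕ) :
    (sympEquiv n).symm (Sum.inr 0) = Sum.inl 1 := rfl
@[simp] private lemma sympEquiv_symm_inl_succ (n : ℕ) (i : Fin n) :
    (sympEquiv n).symm (Sum.inl i.succ) = Sum.inr (Sum.inl i) := by
  simp [sympEquiv]
@[simp] private lemma sympEquiv_symm_inr_succ (n : ℕ) (i : Fin n) :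
    (sympEquiv n).symm (Sum.inr i.succ) = Sum.inr (Sum.inr i) := by
  simp [sympEquiv]

theorem symplectic_basis_aux (N : ℕ) :
    ∀ (K : Type*) (V : Type*) [Field K] [AddCommGroup V], ∀ [Module K V] [FiniteDimensional K V],
    ∀ (B : LinearMap.BilinForm K V), B.IsAlt → B.Nondegenerate → finrank K V ≤ N →
    ∃ n : ℕ, ∃ b : Basis (Fin n ⊕ Fin n) K V,
      (∀ i j, B (b (Sum.inl i)) (b (Sum.inl j)) = 0) ∧
      (∀ i j, B (b (Sum.inr i)) (b (Sum.inr j)) = 0) ∧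
      (∀ i j, B (b (Sum.inl i)) (b (Sum.inr j)) = if i = j then 1 else 0) := by
  induction N with
  | zero =>
    intro K V _ _ _ _ B halt hnd hle
    have hsub : Subsingleton V := finrank_zero_iff.mp (Nat.le_zero.mp hle)
    refine ⟨0, Basis.empty V, ?_, ?_, ?_⟩ <;> exact fun i => i.elim0
  | succ N ih =>
    intro K V _ _ _ _ B halt hnd hle
    rcases Nat.eq_zero_or_pos (finrank K V) with h0 | hpos
    · have hsub : Subsingleton V := finrank_zero_iff.mp h0
      refine ⟨0, Basis.empty V, ?_, ?_, ?_⟩ <;> exact fun i => i.elim0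
    have : Nontrivial V := finrank_pos_iff.mp hpos
    obtain ⟨x, hx⟩ := exists_ne (0 : V)
    have hrefl : B.IsRefl := halt.isRefl
    -- find y with B x y = 1
    obtain ⟨y', hy'⟩ : ∃ y', B x y' ≠ 0 := by
      by_contra hc
      push_neg at hc
      exact hx (hnd.1 x hc)
    set y : V := (B x y')⁻¹ • y' with hy
    have hxy : B x y = 1 := by
      rw [hy, map_smul, smul_eq_mul, inv_mul_cancel₀ hy']
    have hyx : B y x = -1 := by
      rw [← LinearMap.IsAlt.neg halt x y, hxy]
    have hli : LinearIndependent K ![x, y] := by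
      rw [LinearIndependent.pair_iff]
      intro s t hst
      have h1 := congrArg (fun v => B v y) hst
      simp only [map_add, map_smul, LinearMap.add_apply, LinearMap.smul_apply,
        smul_eq_mul, map_zero, LinearMap.zero_apply] at h1
      rw [hxy, halt y, mul_one, mul_zero, add_zero] at h1
      subst h1
      simp only [zero_smul, zero_add] at hst
      have h2 := congrArg (fun v => B v x) hst
      simp only [map_smul, LinearMap.smul_apply, smul_eq_mul, map_zero,
        LinearMap.zero_apply] at h2
      rw [hyx] at h2
      constructor
      · rfl
      · simpa using h2
    -- the plane spanned by x, y
    set W : Submodule K V := Submodule.span K (Set.range ![x, y]) with hW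
    have hxW : x ∈ W := Submodule.subset_span ⟨0, rfl⟩
    have hyW : y ∈ W := Submodule.subset_span ⟨1, rfl⟩
    have hWpair : W = Submodule.span K {x, y} := by
      rw [hW]; congr 1; ext z; simp [Fin.exists_fin_two]; tauto
    set bW : Basis (Fin 2) K W := Basis.span hli with hbWdef
    have hfrW : finrank K W = 2 := by
      rw [finrank_eq_card_basis bW, Fintype.card_fin]
    have hndW : (B.restrict W).Nondegenerate := by
      have haltW : (B.restrict W).IsAlt := fun v => halt v
      refine haltW.isRefl.nondegenerate_iff_separatingLeft.mpr ?_
      rintro ⟨v, hv⟩ h0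
      obtain ⟨a, b, hab⟩ := Submodule.mem_span_pair.mp (hWpair ▸ hv)
      have h1 : B v y = 0 := h0 ⟨y, hyW⟩
      have h2 : B v x = 0 := h0 ⟨x, hxW⟩
      rw [← hab] at h1 h2
      simp only [map_add, map_smul, LinearMap.add_apply, LinearMap.smul_apply,
        smul_eq_mul] at h1 h2
      rw [hxy, halt y, mul_one, mul_zero, add_zero] at h1
      rw [hyx, halt x, mul_zero, zero_add] at h2
      subst h1
      have hb : b = 0 := by
        have : b * (-1) = 0 := h2
        simpa using this
      subst hb
      simp only [zero_smul, add_zero] at hab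
      exact Subtype.ext hab.symm
    have hcompl : IsCompl W (B.orthogonal W) :=
      isCompl_orthogonal_of_restrict_nondegenerate hrefl hndW
    set W' : Submodule K V := B.orthogonal W with hW'
    have hdisj : Disjoint W' (B.orthogonal W') := by
      rw [hW', orthogonal_orthogonal hnd hrefl]
      exact hcompl.disjoint.symm
    have hndW' : (B.restrict W').Nondegenerate :=
      nondegenerate_restrict_of_disjoint_orthogonal B hrefl hdisj
    have haltW' : (B.restrict W').IsAlt := fun v => halt v
    have hfrW' : finrank K W' ≤ N := by
      have h2 : finrank K W' = finrank K V - 2 := by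
        rw [hW', finrank_orthogonal hnd W, hfrW]
      omega
    obtain ⟨n, b', hb1, hb2, hb3⟩ := ih K W' (B.restrict W') haltW' hndW' hfrW'
    -- values of B between W and W'
    have hBW' : ∀ (w : V), w ∈ W → ∀ (v : W'), B w (v : V) = 0 := fun w hw v => v.2 w hw
    have hBW'2 : ∀ (v : W') (w : V), w ∈ W → B (v : V) w = 0 := fun v w hw =>
      hrefl _ _ (hBW' w hw v)
    -- assemble the basis
    set bV : Basis (Fin 2 ⊕ (Fin n ⊕ Fin n)) K V :=
      (bW.prod b').map (Submodule.prodEquivOfIsCompl W W' hcompl) with hbV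
    have hbVl : ∀ j : Fin 2, bV (Sum.inl j) = ![x, y] j := by
      intro j
      rw [hbV, Basis.map_apply, Basis.prod_apply, Submodule.coe_prodEquivOfIsCompl']
      simp [hbWdef]
      exact Module.Basis.coe_span_apply hli j
    have hbVr : ∀ s, bV (Sum.inr s) = (b' s : V) := by
      intro s
      rw [hbV, Basis.map_apply, Basis.prod_apply, Submodule.coe_prodEquivOfIsCompl']
      simp
    have hbVrW' : ∀ s, (bV (Sum.inr s)) ∈ W' := fun s => by rw [hbVr]; exact (b' s).2
    have hB'val : ∀ s t, B (bV (Sum.inr s)) (bV (Sum.inr t)) = (B.restrict W') (b' s) (b' t) := by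
      intro s t; rw [hbVr, hbVr]; rfl
    refine ⟨n + 1, bV.reindex (sympEquiv n), ?_, ?_, ?_⟩
    · intro i j
      rw [Basis.reindex_apply, Basis.reindex_apply]
      induction i using Fin.cases <;> induction j using Fin.cases <;>
        simp only [sympEquiv_symm_inl_zero, sympEquiv_symm_inl_succ, hbVl]
      · simpa using halt x
      · exact hBW' x hxW ⟨_, hbVrW' _⟩
      · exact hBW'2 ⟨_, hbVrW' _⟩ x hxW
      · rw [hB'val]; exact hb1 _ _
    · intro i j
      rw [Basis.reindex_apply, Basis.reindex_apply]
      induction i using Fin.cases <;> induction j using Fin.cases <;>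
        simp only [sympEquiv_symm_inr_zero, sympEquiv_symm_inr_succ, hbVl]
      · simpa using halt y
      · exact hBW' y hyW ⟨_, hbVrW' _⟩
      · exact hBW'2 ⟨_, hbVrW' _⟩ y hyW
      · rw [hB'val]; exact hb2 _ _
    · intro i j
      rw [Basis.reindex_apply, Basis.reindex_apply]
      induction i using Fin.cases <;> induction j using Fin.cases <;>
        simp only [sympEquiv_symm_inl_zero, sympEquiv_symm_inl_succ,
          sympEquiv_symm_inr_zero, sympEquiv_symm_inr_succ, hbVl]
      · simpa using hxy
      · rw [if_neg (Fin.succ_ne_zero _).symm]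
        exact hBW' x hxW ⟨_, hbVrW' _⟩
      · rw [if_neg (Fin.succ_ne_zero _)]
        exact hBW'2 ⟨_, hbVrW' _⟩ y hyW
      · rw [hB'val, hb3]
        simp [Fin.succ_inj]

/-- A finite-dimensional nilpotent Lie algebra `u` over a field of characteristic zero whose
center equals the derived subalgebra `[u,u]` and has dimension one is a Heisenberg Lie
algebra: it admits a basis `{X_1,…,X_n, Y_1,…,Y_n, Z}` (indexed by `Fin n ⊕ Fin n ⊕ Unit`)
in which the only nonzero brackets among basis elements are `[X_i, Y_i] = Z = -[Y_i, X_i]`. -/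
theorem heisenberg_of_center_eq_derived
    (k : Type*) (u : Type*) [Field k] [CharZero k]
    [LieRing u] [LieAlgebra k u] [Module.Finite k u] [LieModule.IsNilpotent u u]
    (hcd : LieAlgebra.center k u = ⁅(⊤ : LieIdeal k u), (⊤ : LieIdeal k u)⁆)
    (hdim : finrank k (LieAlgebra.center k u) = 1) :
    ∃ n : ℕ, 1 ≤ n ∧ ∃ B : Basis (Fin n ⊕ Fin n ⊕ Unit) k u,
      (∀ i j : Fin n, ⁅B (Sum.inl i), B (Sum.inl j)⁆ = 0) ∧
      (∀ i j : Fin n, ⁅B (Sum.inr (Sum.inl i)), B (Sum.inr (Sum.inl j))⁆ = 0) ∧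
      (∀ i j : Fin n, ⁅B (Sum.inl i), B (Sum.inr (Sum.inl j))⁆ =
          if i = j then B (Sum.inr (Sum.inr ())) else 0) ∧
      (∀ i j : Fin n, ⁅B (Sum.inr (Sum.inl i)), B (Sum.inl j)⁆ =
          if i = j then -B (Sum.inr (Sum.inr ())) else 0) ∧
      (∀ i : Fin n, ⁅B (Sum.inl i), B (Sum.inr (Sum.inr ()))⁆ = 0) ∧
      (∀ i : Fin n, ⁅B (Sum.inr (Sum.inl i)), B (Sum.inr (Sum.inr ()))⁆ = 0) := by
  classical
  set Cs : Submodule k u := LieSubmodule.toSubmodule (LieAlgebra.center k u) with hCs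
  have hdim' : finrank k Cs = 1 := hdim
  have bz : Basis Unit k Cs := Module.basisUnique Unit hdim'
  set Z0 : Cs := bz () with hZ0
  have hZ0ne : (Z0 : u) ≠ 0 := by
    simpa using bz.ne_zero ()
  -- coordinate functional on the center
  set φ : Cs →ₗ[k] k := Finsupp.lapply () ∘ₗ (bz.repr : Cs →ₗ[k] (Unit →₀ k)) with hφ
  have hφval : ∀ c : Cs, c = φ c • Z0 := by
    intro c
    conv_lhs => rw [← bz.sum_repr c]
    simp [hφ, hZ0]
  -- brackets lie in the center
  have hmem : ∀ x y : u, ⁅x, y⁆ ∈ Cs := by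
    intro x y
    rw [hCs, LieSubmodule.mem_toSubmodule, hcd]
    exact LieSubmodule.lie_mem_lie (LieSubmodule.mem_top x) (LieSubmodule.mem_top y)
  have hcenter0 : ∀ c : u, c ∈ Cs → ∀ x : u, ⁅x, c⁆ = 0 := by
    intro c hc x
    rw [hCs, LieSubmodule.mem_toSubmodule] at hc
    exact (LieModule.mem_maxTrivSubmodule k u u c).mp hc x
  -- bracket as a bilinear map into the center
  set β : u →ₗ[k] u →ₗ[k] Cs := LinearMap.mk₂ k (fun x y => ⟨⁅x, y⁆, hmem x y⟩)
    (fun m₁ m₂ n => by ext; simp [add_lie])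
    (fun c m n => by ext; simp [smul_lie])
    (fun m n₁ n₂ => by ext; simp [lie_add])
    (fun c m n => by ext; simp [lie_smul]) with hβ
  set ω : LinearMap.BilinForm k u := β.compr₂ φ with hω
  have hωapply : ∀ x y : u, ω x y = φ ⟨⁅x, y⁆, hmem x y⟩ := fun x y => rfl
  have hbrak : ∀ x y : u, ⁅x, y⁆ = ω x y • (Z0 : u) := by
    intro x y
    have h1 := hφval ⟨⁅x, y⁆, hmem x y⟩
    have h2 := congrArg (Subtype.val) h1
    simpa [hωapply] using h2
  have halt : ω.IsAlt := by
    intro x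
    rw [hωapply]
    have h : (⟨⁅x, x⁆, hmem x x⟩ : Cs) = 0 := Subtype.ext (lie_self x)
    rw [h, map_zero]
  have hωcenter : ∀ (x c : u), c ∈ Cs → ω x c = 0 := by
    intro x c hc
    rw [hωapply]
    have h : (⟨⁅x, c⁆, hmem x c⟩ : Cs) = 0 := Subtype.ext (hcenter0 c hc x)
    rw [h, map_zero]
  -- complement of the center
  obtain ⟨W, hWc⟩ := Submodule.exists_isCompl Cs
  have hndW : (ω.restrict W).Nondegenerate := by
    have haltW : (ω.restrict W).IsAlt := fun v => halt v
    refine haltW.isRefl.nondegenerate_iff_separatingLeft.mpr ?_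
    rintro ⟨w, hw⟩ h0
    have hall : ∀ y : u, ω w y = 0 := by
      intro y
      obtain ⟨c, w', hc, hw', rfl⟩ := Submodule.codisjoint_iff_exists_add_eq.mp hWc.codisjoint y
      rw [map_add, hωcenter w c hc, zero_add]
      exact h0 ⟨w', hw'⟩
    have hwC : w ∈ Cs := by
      rw [hCs, LieSubmodule.mem_toSubmodule, show (w ∈ LieAlgebra.center k u) ↔ _ from LieModule.mem_maxTrivSubmodule k u u w]
      intro x
      rw [← lie_skew]
      have hb : ⁅w, x⁆ = 0 := by rw [hbrak w x, hall x, zero_smul]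
      rw [hb, neg_zero]
    have hmemb : w ∈ Cs ⊓ W := ⟨hwC, hw⟩
    rw [hWc.inf_eq_bot] at hmemb
    exact Subtype.ext hmemb
  obtain ⟨n, bw, hb1, hb2, hb3⟩ := symplectic_basis_aux (finrank k W) k W (ω.restrict W)
    (fun v => halt v) hndW le_rfl
  have hres : ∀ a b : W, ω (a : u) (b : u) = (ω.restrict W) a b := fun a b => rfl
  have hn : 1 ≤ n := by
    by_contra hn0
    push_neg at hn0
    have hn' : n = 0 := by omega
    subst hn'
    have hWbot : W = ⊥ := by
      have hsub : Subsingleton W := by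
        have h0 : finrank k W = 0 := by
          rw [finrank_eq_card_basis bw]
          simp
        exact finrank_zero_iff.mp h0
      exact Submodule.eq_bot_of_subsingleton
    have hCtop : Cs = ⊤ := by
      have h := hWc.sup_eq_top
      rwa [hWbot, sup_bot_eq] at h
    have hallzero : ∀ x y : u, ⁅x, y⁆ = 0 := by
      intro x y
      exact hcenter0 y (hCtop ▸ Submodule.mem_top) x
    have hder : (⁅(⊤ : LieIdeal k u), (⊤ : LieIdeal k u)⁆ : LieIdeal k u) = ⊥ :=
      (LieSubmodule.lie_eq_bot_iff _ _).mpr (fun x _ m _ => hallzero x m)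
    have h1 : (Z0 : u) ∈ LieAlgebra.center k u := (LieSubmodule.mem_toSubmodule _).mp Z0.2
    rw [hcd.trans hder] at h1
    exact hZ0ne ((LieSubmodule.mem_bot _).mp h1)
  set e : ((Fin n ⊕ Fin n) ⊕ Unit) ≃ (Fin n ⊕ Fin n ⊕ Unit) :=
    Equiv.sumAssoc (Fin n) (Fin n) Unit with he
  set bigB : Basis ((Fin n ⊕ Fin n) ⊕ Unit) k u :=
    (bw.prod bz).map (Submodule.prodEquivOfIsCompl W Cs hWc.symm) with hbigB
  have hval1 : ∀ s, bigB (Sum.inl s) = (bw s : u) := by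
    intro s
    rw [hbigB, Basis.map_apply, Basis.prod_apply, Submodule.coe_prodEquivOfIsCompl']
    simp
  have hval2 : bigB (Sum.inr ()) = (Z0 : u) := by
    rw [hbigB, Basis.map_apply, Basis.prod_apply, Submodule.coe_prodEquivOfIsCompl']
    simp [hZ0]
  have hsymm1 : ∀ i : Fin n, e.symm (Sum.inl i) = Sum.inl (Sum.inl i) := fun i => rfl
  have hsymm2 : ∀ i : Fin n, e.symm (Sum.inr (Sum.inl i)) = Sum.inl (Sum.inr i) := fun i => rfl
  have hsymm3 : e.symm (Sum.inr (Sum.inr ())) = Sum.inr () := rfl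
  refine ⟨n, hn, bigB.reindex e, ?_, ?_, ?_, ?_, ?_, ?_⟩
  · intro i j
    rw [Basis.reindex_apply, Basis.reindex_apply, hsymm1, hsymm1, hval1, hval1,
      hbrak, hres, hb1, zero_smul]
  · intro i j
    rw [Basis.reindex_apply, Basis.reindex_apply, hsymm2, hsymm2, hval1, hval1,
      hbrak, hres, hb2, zero_smul]
  · intro i j
    rw [Basis.reindex_apply, Basis.reindex_apply, Basis.reindex_apply, hsymm1, hsymm2, hsymm3,
      hval1, hval1, hval2, hbrak, hres, hb3]
    rcases eq_or_ne i j with rfl | hij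
    · simp
    · simp [hij]
  · intro i j
    rw [Basis.reindex_apply, Basis.reindex_apply, Basis.reindex_apply, hsymm1, hsymm2, hsymm3,
      hval1, hval1, hval2, ← lie_skew, hbrak, hres, hb3]
    rcases eq_or_ne i j with rfl | hij
    · simp
    · simp [hij, Ne.symm hij]
  · intro i
    rw [Basis.reindex_apply, Basis.reindex_apply, hsymm1, hsymm3, hval1, hval2]
    exact hcenter0 _ Z0.2 _
  · intro i
    rw [Basis.reindex_apply, Basis.reindex_apply, hsymm2, hsymm3, hval1, hval2]
    exact hcenter0 _ Z0.2 _
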